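/- arXiv:1010.0401 — 3 statements merged into one kernel-verified Lean document; each statement's English description precedes it below -/
import Mathlib

section
/- Let p be a shortest path in a weighted graph G, partitioned into consecutive disjoint subpaths p_1, p_2, ..., p_ℓ each of length 4γ (except possibly the last, which may be shorter), and for each i let X_i be the cluster consisting of the 4γ-neighborhood of p_i in G. Then for every i, dist(X_i, X_{i+3}) > γ; that is, there do not exist nodes u ∈ X_i and v ∈ X_{i+3} with N_γ(u) ⊆ X_i, N_γ(v) ⊆ X_{i+3}, and dist(u,v) ≤ γ. -/
/-!
Statement 0 (Proof of Lemma `color-path`, first part).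

Let `p` be a shortest path in a weighted graph `G`, partitioned into consecutive
disjoint subpaths `p_1, p_2, …` each of length `4γ` (except possibly the last,
which may be shorter), and for each `i` let `X_i` be the cluster consisting of
the `4γ`-neighborhood of `p_i` in `G`.  Then for every `i`,
`dist(X_i, X_{i+3}) > γ`; that is, there do not exist nodes `u ∈ X_i` and
`v ∈ X_{i+3}` with `N_γ(u) ⊆ X_i`, `N_γ(v) ⊆ X_{i+3}`, and `dist(u,v) ≤ γ`.
-/

/-- `dist` is the shortest-path metric of a weighted graph. -/
structure IsGraphMetric {V : Type*} (dist : V → V → ℕ) : Prop where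
  refl : ∀ v, dist v v = 0
  symm : ∀ u v, dist u v = dist v u
  triangle : ∀ u v w, dist u w ≤ dist u v + dist v w

/-- The cluster `X` `k`-satisfies the node `v`:
the `k`-neighborhood `N_k(v)` of `v` is contained in `X`. -/
def KSat {V : Type*} (dist : V → V → ℕ) (X : Set V) (k : ℕ) (v : V) : Prop :=
  ∀ u, dist v u ≤ k → u ∈ X

/-- `dist(X, Y) ≤ k` for two clusters: there are nodes `u ∈ X`, `v ∈ Y` such
that `u` is `k`-satisfied in `X`, `v` is `k`-satisfied in `Y`, and
`dist(u,v) ≤ k`. -/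
def ClusterDistLE {V : Type*} (dist : V → V → ℕ) (k : ℕ) (X Y : Set V) : Prop :=
  ∃ u ∈ X, ∃ v ∈ Y, KSat dist X k u ∧ KSat dist Y k v ∧ dist u v ≤ k

theorem shortest_path_clusters_three_apart
    {V : Type*} (dist : V → V → ℕ) (hmetric : IsGraphMetric dist)
    (γ : ℕ) (hγ : 0 < γ)
    -- `P` is the vertex set of a shortest path `p` of `G`, parameterized by the
    -- position `pos` along the path (being a shortest path, the distance between
    -- two of its nodes equals the difference of their positions):
    (P : Set V) (pos : V → ℕ)
    (hgeodesic : ∀ u ∈ P, ∀ v ∈ P, dist u v = Nat.dist (pos u) (pos v))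
    -- `p` is divided into consecutive disjoint subpaths of length `4γ`
    -- (the last one may be shorter):
    (subpath : ℕ → Set V)
    (hsubpath : ∀ i, subpath i =
      {u | u ∈ P ∧ 4 * γ * i ≤ pos u ∧ pos u < 4 * γ * (i + 1)})
    -- the cluster `X_i` is the `4γ`-neighborhood of the subpath `p_i` in `G`:
    (X : ℕ → Set V)
    (hX : ∀ i, X i = {u | ∃ x ∈ subpath i, dist x u ≤ 4 * γ}) :
    ∀ i : ℕ, ¬ ClusterDistLE dist γ (X i) (X (i + 3)) := by
  rintro i ⟨u, hu, v, hv, hKu, hKv, hd⟩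
  -- `u` is within `γ` of `v`, so `u ∈ X (i+3)` by `KSat` of `v`.
  have hu3 : u ∈ X (i + 3) := hKv u (by rw [hmetric.symm]; exact hd)
  rw [hX] at hu hu3
  obtain ⟨x, hx, hxu⟩ := hu
  obtain ⟨y, hy, hyu⟩ := hu3
  rw [hsubpath] at hx hy
  obtain ⟨hxP, _, hx2⟩ := hx
  obtain ⟨hyP, hy1, _⟩ := hy
  have hxy : dist x y ≤ 8 * γ := by
    calc dist x y ≤ dist x u + dist u y := hmetric.triangle x u y
    _ ≤ 4 * γ + 4 * γ := by
        have : dist u y ≤ 4 * γ := by rw [hmetric.symm]; exact hyu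
        omega
    _ = 8 * γ := by ring
  have key : pos x + 8 * γ < pos y := by
    have h : 4 * γ * (i + 1) + 8 * γ = 4 * γ * (i + 3) := by ring
    omega
  have := hgeodesic x hxP y hyP
  rw [Nat.dist] at this
  omega
end

section
/- Let p be a shortest path in a weighted graph G, partitioned into consecutive disjoint subpaths p_1, p_2, ..., p_ℓ each of length 4γ (except possibly the last, which may be shorter), and for each i let X_i be the cluster consisting of the 4γ-neighborhood of p_i in G. Then the set of clusters {X_1, ..., X_ℓ} admits a valid distance-γ coloring with 3 colors; in particular the assignment giving X_i the color (i mod 3) + 1 is a valid distance-γ coloring. -/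
/-- A valid distance-`k` coloring of the indexed family of clusters `X` with a
palette of `χ` colors `[1,χ]`: no two distinct clusters at cluster-distance at
most `k` receive the same color. -/
def IsValidColoring {V ι : Type*} (dist : V → V → ℕ) (k : ℕ)
    (X : ι → Set V) (col : ι → ℕ) (χ : ℕ) : Prop :=
  (∀ i, col i ∈ Finset.Icc 1 χ) ∧
  ∀ i j, X i ≠ X j → ClusterDistLE dist k (X i) (X j) → col i ≠ col j

theorem shortest_path_cluster_coloring
    {V : Type*} (dist : V → V → ℕ) (hmetric : IsGraphMetric dist)
    (γ : ℕ) (hγ : 0 < γ)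
    -- `P` is the vertex set of a shortest path `p` of `G`, parameterized by the
    -- position `pos` along the path:
    (P : Set V) (pos : V → ℕ)
    (hgeodesic : ∀ u ∈ P, ∀ v ∈ P, dist u v = Nat.dist (pos u) (pos v))
    -- `p` is divided into consecutive disjoint subpaths of length `4γ`:
    (subpath : ℕ → Set V)
    (hsubpath : ∀ i, subpath i =
      {u | u ∈ P ∧ 4 * γ * i ≤ pos u ∧ pos u < 4 * γ * (i + 1)})
    -- the cluster `X_i` is the `4γ`-neighborhood of the subpath `p_i` in `G`:
    (X : ℕ → Set V)
    (hX : ∀ i, X i = {u | ∃ x ∈ subpath i, dist x u ≤ 4 * γ}) :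
    -- the clusters admit a valid distance-`γ` coloring with `3` colors …
    (∃ col : ℕ → ℕ, IsValidColoring dist γ X col 3) ∧
    -- … in particular, coloring `X_i` with `(i % 3) + 1` is such a coloring:
    IsValidColoring dist γ X (fun i => i % 3 + 1) 3 := by
  have key : IsValidColoring dist γ X (fun i => i % 3 + 1) 3 := by
    constructor
    · intro i
      simp only [Finset.mem_Icc]
      omega
    · intro i j hne hcd hcol
      simp only [add_left_inj] at hcol
      have hine : i ≠ j := fun h => hne (by rw [h])
      obtain ⟨u, hu, v, hv, hsu, hsv, huv⟩ := hcd
      have hvXi : v ∈ X i := hsu v huv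
      rw [hX i] at hvXi
      rw [hX j] at hv
      obtain ⟨x, hx, hxv⟩ := hvXi
      obtain ⟨y, hy, hyv⟩ := hv
      rw [hsubpath i] at hx
      rw [hsubpath j] at hy
      obtain ⟨hxP, hx1, hx2⟩ := hx
      obtain ⟨hyP, hy1, hy2⟩ := hy
      have hxy : dist x y ≤ 8 * γ := by
        have h1 := hmetric.triangle x v y
        have h2 : dist v y = dist y v := hmetric.symm v y
        omega
      rw [hgeodesic x hxP y hyP] at hxy
      unfold Nat.dist at hxy
      rcases (show i + 3 ≤ j ∨ j + 3 ≤ i by omega) with h | h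
      · have hm : 4 * γ * (i + 3) ≤ 4 * γ * j := Nat.mul_le_mul_left _ h
        have e1 : 4 * γ * (i + 3) = 4 * γ * i + 12 * γ := by ring
        have e2 : 4 * γ * (i + 1) = 4 * γ * i + 4 * γ := by ring
        omega
      · have hm : 4 * γ * (j + 3) ≤ 4 * γ * i := Nat.mul_le_mul_left _ h
        have e1 : 4 * γ * (j + 3) = 4 * γ * j + 12 * γ := by ring
        have e2 : 4 * γ * (j + 1) = 4 * γ * j + 4 * γ := by ring
        omega
  exact ⟨⟨_, key⟩, key⟩
end

section
/- Zones S_i and S_{i+3} of Algorithm Planar-Cover(G, γ) are node-disjoint, and any two nodes u, v that are γ-satisfied (with respect to G) in clusters of zones S_i and S_{i+3} respectively satisfy dist(u,v) > γ. Consequently, coloring the clusters of all zones with three disjoint palettes of 6 colors each, where zone S_i uses the ((i mod 3) + 1)-th palette and each zone's clusters are colored by a valid distance-γ coloring with 6 colors, yields a valid distance-γ coloring of the whole cover with 18 colors. -/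
theorem zone_coloring
    {V : Type*} (dist : V → V → ℕ) (hmetric : IsGraphMetric dist)
    (γ : ℕ) (hγ : 0 < γ)
    -- the bands `W_i` of `Planar-Cover(G,γ)`, pairwise node-disjoint:
    (W : ℕ → Set V)
    (hW : ∀ i j, i ≠ j → Disjoint (W i) (W j))
    -- zone `S_i` consists of three consecutive bands:
    (S : ℕ → Set V)
    (hS : ∀ i, S i = W i ∪ W (i + 1) ∪ W (i + 2))
    -- the clusters of zone `S_i` obtained by `Depth-Cover(S_i, 3γ-1)` are
    -- `X i 0, …, X i (m i - 1)`, all contained in the zone: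
    (m : ℕ → ℕ) (X : ℕ → ℕ → Set V)
    (hXsub : ∀ i j, j < m i → X i j ⊆ S i)
    -- each zone's clusters come with a valid distance-`γ` coloring with
    -- `6` colors (Lemma `color-depth`):
    (colZ : ℕ → ℕ → ℕ)
    (hcolZ_mem : ∀ i j, j < m i → colZ i j ∈ Finset.Icc 1 6)
    (hcolZ_valid : ∀ i j k, j < m i → k < m i → X i j ≠ X i k →
        ClusterDistLE dist γ (X i j) (X i k) → colZ i j ≠ colZ i k) :
    -- (a) zones `S_i` and `S_{i+3}` are node-disjoint:
    (∀ i, Disjoint (S i) (S (i + 3))) ∧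
    -- (b) nodes `γ`-satisfied in clusters of `S_i` resp. `S_{i+3}` are more
    --     than `γ` apart:
    (∀ i j k u v, j < m i → k < m (i + 3) →
        u ∈ X i j → v ∈ X (i + 3) k →
        KSat dist (X i j) γ u → KSat dist (X (i + 3) k) γ v →
        γ < dist u v) ∧
    -- (c) giving the cluster `X i j` the color `6·(i mod 3) + colZ i j`
    --     (zone `S_i` uses the `((i mod 3)+1)`-th palette of `6` colors)
    --     is a valid distance-`γ` coloring of the whole cover with `18` colors:
    ((∀ i j, j < m i → 6 * (i % 3) + colZ i j ∈ Finset.Icc 1 18) ∧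
      ∀ i j i' j', j < m i → j' < m i' → X i j ≠ X i' j' →
        ClusterDistLE dist γ (X i j) (X i' j') →
        6 * (i % 3) + colZ i j ≠ 6 * (i' % 3) + colZ i' j') := by
  have hSdisj : ∀ i i', i + 3 ≤ i' → Disjoint (S i) (S i') := by
    intro i i' h
    rw [hS i, hS i']
    simp only [Set.disjoint_union_left, Set.disjoint_union_right]
    and_intros <;> exact hW _ _ (by omega)
  have hfar : ∀ i i' j j', i + 3 ≤ i' → j < m i → j' < m i' →
      ¬ ClusterDistLE dist γ (X i j) (X i' j') := by
    rintro i i' j j' h hj hj' ⟨u, hu, v, hv, hKu, hKv, hd⟩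
    have hvX : v ∈ X i j := hKu v hd
    exact (Set.disjoint_left.mp (hSdisj i i' h) (hXsub i j hj hvX))
      (hXsub i' j' hj' hv)
  refine ⟨fun i => hSdisj i (i + 3) le_rfl, ?_, ?_, ?_⟩
  · intro i j k u v hj hk hu hv hKu hKv
    by_contra hle
    push_neg at hle
    exact hfar i (i + 3) j k le_rfl hj hk ⟨u, hu, v, hv, hKu, hKv, hle⟩
  · intro i j hj
    have hc := hcolZ_mem i j hj
    simp only [Finset.mem_Icc] at hc ⊢
    omega
  · intro i j i' j' hj hj' hne hdist
    by_cases h3 : i + 3 ≤ i'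
    · exact absurd hdist (hfar i i' j j' h3 hj hj')
    by_cases h3' : i' + 3 ≤ i
    · obtain ⟨u, hu, v, hv, hKu, hKv, hd⟩ := hdist
      exact absurd ⟨v, hv, u, hu, hKv, hKu, by rwa [hmetric.symm]⟩
        (hfar i' i j' j h3' hj' hj)
    by_cases hii : i = i'
    · subst hii
      have := hcolZ_valid i j j' hj hj' hne hdist
      omega
    · have hmod : i % 3 ≠ i' % 3 := by omega
      have hc := hcolZ_mem i j hj
      have hc' := hcolZ_mem i' j' hj'
      simp only [Finset.mem_Icc] at hc hc'
      omega
end
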